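/- arXiv:1506.03944 — 2 statements merged into one kernel-verified Lean document; each statement's English description precedes it below -/
import Mathlib

section
/- The assignment σ ↦ V(σ) is a bijection from the set of partial ordered set partitions of [n] onto the set of nonempty simplices of the standard chromatic subdivision χ(Δⁿ). Moreover: (1) the simplex V(σ) has dimension dim σ (i.e., |V(σ)| = dim σ + 1); (2) if σ is an ordered set partition of [n], its simplex is a maximal (n-dimensional) one; (3) the nonempty subsets of V(σ) are exactly the sets V(dl(σ,S)) for subsets S ⊊ C(σ). -/
open Finset

/-- union of a list of finsets -/
def lunion {α : Type*} [DecidableEq α] (L : List (Finset α)) : Finset α := L.foldr (· ∪ ·) ∅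

/-- `IsOSP A L` : `L` is an ordered set partition of the finite set `A`. -/
def IsOSP {α : Type*} [DecidableEq α] (A : Finset α) (L : List (Finset α)) : Prop :=
  (∀ B ∈ L, B.Nonempty) ∧ L.Pairwise (fun B C => Disjoint B C) ∧ lunion L = A

/-- `seenBlk L x` = `A_1 ∪ … ∪ A_{i(x)}`, the union of the blocks of `L` up to and
including the block containing `x`. -/
def seenBlk {α : Type*} [DecidableEq α] : List (Finset α) → α → Finset α
  | [], _ => ∅
  | A :: rest, x => if x ∈ A then A else A ∪ seenBlk rest x

/-- rank (1-based position in the increasing order) of `x` in the finset `S`. -/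
def rankIn (S : Finset ℕ) (x : ℕ) : ℕ := (S.filter (fun y => y ≤ x)).card

/-- the set `F(σ)` of flippable colors, for an ordered set partition of `[n] = {0,…,n}` -/
def Fset (n : ℕ) (L : List (Finset ℕ)) : Finset ℕ :=
  match L.getLast? with
  | some A => if A.card = 1 then Finset.range (n+1) \ A else Finset.range (n+1)
  | none => Finset.range (n+1)

/-- the flip `F(σ,x)` of an ordered set partition with respect to the color `x` -/
def flipOSP (x : ℕ) : List (Finset ℕ) → List (Finset ℕ)
  | [] => []
  | A :: rest =>
    if x ∈ A then
      if 2 ≤ A.card then {x} :: A.erase x :: rest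
      else
        match rest with
        | [] => [A]
        | B :: rest' => insert x B :: rest'
    else A :: flipOSP x rest

def levelAux : List ℕ → List (Finset ℕ) → Option ℕ
  | [], _ => none
  | _ :: _, [] => none
  | x :: xs, A :: As => if A = {x} then levelAux xs As else some x

/-- `levelFn Σ σ` = `level(σ,Σ)` (as an `Option`; `none` = undefined). -/
def levelFn (Sig : List ℕ) (L : List (Finset ℕ)) : Option ℕ :=
  levelAux Sig.reverse L.reverse

/-- ordered set partitions of `[n] = {0,…,n}` -/
def OSPn (n : ℕ) : Type := {L : List (Finset ℕ) // IsOSP (Finset.range (n+1)) L}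

/-- the graph `Γ_n`: vertices are the ordered set partitions of `[n]`, with `σ` and
`F(σ,x)` joined by an edge for every `x ∈ F(σ)`. -/
def Gamma (n : ℕ) : SimpleGraph (OSPn n) where
  Adj σ τ := σ ≠ τ ∧
    ((∃ x ∈ Fset n σ.1, τ.1 = flipOSP x σ.1) ∨ (∃ x ∈ Fset n τ.1, σ.1 = flipOSP x τ.1))
  symm := ⟨fun σ τ h => ⟨h.1.symm, h.2.symm⟩⟩
  loopless := ⟨fun σ h => h.1 rfl⟩

/-- a matching: a set of edges of `G`, no two of which share a vertex -/
def IsMatchingSet {V : Type*} (G : SimpleGraph V) (M : Set (Sym2 V)) : Prop :=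
  (∀ e ∈ M, e ∈ G.edgeSet) ∧ ∀ e ∈ M, ∀ f ∈ M, ∀ v : V, v ∈ e → v ∈ f → e = f

/-- a vertex is critical w.r.t. `M` if it lies in no edge of `M` -/
def CriticalVx {V : Type*} (M : Set (Sym2 V)) (v : V) : Prop := ∀ e ∈ M, v ∉ e

/-- the standard matching `M_Σ`, as a set of edges of `Γ_n` -/
def MSigma (n : ℕ) (Sig : List ℕ) : Set (Sym2 (OSPn n)) :=
  {e | ∃ σ τ : OSPn n, ∃ x, levelFn Sig σ.1 = some x ∧ τ.1 = flipOSP x σ.1 ∧ e = s(σ, τ)}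

/-- a list of edges is alternating w.r.t. `M` -/
def Alternates {V : Type*} (M : Set (Sym2 V)) (es : List (Sym2 V)) : Prop :=
  es.Chain' (fun e f => e ∈ M ↔ f ∉ M)

def IsProperlyAlternating {V : Type*} {G : SimpleGraph V} (M : Set (Sym2 V)) {u v : V}
    (p : G.Walk u v) : Prop :=
  Alternates M p.edges ∧
  (∀ e, p.edges.head? = some e → e ∉ M → CriticalVx M u) ∧
  (∀ e, p.edges.getLast? = some e → e ∉ M → CriticalVx M v)

def IsSemiAugmenting {V : Type*} {G : SimpleGraph V} (M : Set (Sym2 V)) {u v : V}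
    (p : G.Walk u v) : Prop :=
  IsProperlyAlternating M p ∧
  (∃ e, p.edges.head? = some e ∧ e ∈ M) ∧ (∃ e, p.edges.getLast? = some e ∧ e ∉ M)

def IsNonAugmenting {V : Type*} {G : SimpleGraph V} (M : Set (Sym2 V)) {u v : V}
    (p : G.Walk u v) : Prop :=
  Alternates M p.edges ∧
  (∃ e, p.edges.head? = some e ∧ e ∈ M) ∧ (∃ e, p.edges.getLast? = some e ∧ e ∈ M)

def IsWeaklySemiAugmenting {V : Type*} {G : SimpleGraph V} (M : Set (Sym2 V)) {u v : V}
    (p : G.Walk u v) : Prop :=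
  Alternates M p.edges ∧
  (p.edges = [] ∨
    ((∃ e, p.edges.head? = some e ∧ e ∈ M) ∧ (∃ e, p.edges.getLast? = some e ∧ e ∉ M)))

/-- a partial ordered set partition, as a list of pairs of blocks `(A_i, B_i)` -/
abbrev RawPOSP := List (Finset ℕ × Finset ℕ)

def carrierP (σ : RawPOSP) : Finset ℕ := (σ.map Prod.fst).foldr (· ∪ ·) ∅
def colorsP (σ : RawPOSP) : Finset ℕ := (σ.map Prod.snd).foldr (· ∪ ·) ∅

/-- `σ` is a partial ordered set partition of `[n] = {0,…,n}` -/
def IsPOSP (n : ℕ) (σ : RawPOSP) : Prop :=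
  σ ≠ [] ∧ (∀ p ∈ σ, p.2.Nonempty ∧ p.2 ⊆ p.1 ∧ p.1 ⊆ Finset.range (n+1)) ∧
  (σ.map Prod.fst).Pairwise (fun A B => Disjoint A B)

/-- view an ordered set partition as a partial one, with `B_i = A_i` -/
def toPairs (L : List (Finset ℕ)) : RawPOSP := L.map (fun A => (A, A))

def dlAux (S : Finset ℕ) : Finset ℕ → RawPOSP → RawPOSP
  | _, [] => []
  | acc, (A, B) :: rest =>
    if B ⊆ S then dlAux S (acc ∪ A) rest
    else (acc ∪ A, B \ S) :: dlAux S ∅ rest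

/-- the deletion `dl(σ, S)` -/
def dl (σ : RawPOSP) (S : Finset ℕ) : RawPOSP := dlAux S ∅ σ

/-- `D(σ, S)` = `A_i ∪ … ∪ A_t` for the minimal `i` with `B_i ∪ … ∪ B_t ⊆ S`, else `∅` -/
def Dfun (S : Finset ℕ) : RawPOSP → Finset ℕ
  | [] => ∅
  | b :: rest => if colorsP (b :: rest) ⊆ S then carrierP (b :: rest) else Dfun S rest

def nodesAux : Finset ℕ → RawPOSP → Finset (Finset ℕ × ℕ)
  | _, [] => ∅
  | acc, (A, B) :: rest => B.image (fun x => (acc ∪ A, x)) ∪ nodesAux (acc ∪ A) rest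

/-- the node set `V(σ)` of a partial ordered set partition -/
def nodesP (σ : RawPOSP) : Finset (Finset ℕ × ℕ) := nodesAux ∅ σ

/-- an ordered set partition of the whole of `[n]`, viewed as a partial one -/
def IsFullOSP (n : ℕ) (σ : RawPOSP) : Prop :=
  IsPOSP n σ ∧ carrierP σ = Finset.range (n+1) ∧ ∀ p ∈ σ, p.2 = p.1

/-- simplices of the standard chromatic subdivision `χ(Δⁿ)` -/
def IsSimplexChi (n : ℕ) (W : Finset (Finset ℕ × ℕ)) : Prop :=
  ∃ σ : RawPOSP, IsFullOSP n σ ∧ W ⊆ nodesP σ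

/-- a linked tuple of partial ordered set partitions -/
def Linked (T : List RawPOSP) : Prop := T.Chain' (fun σ τ => colorsP σ = carrierP τ)

/-- vertices of `χ^d(Δⁿ)`: linked `d`-tuples whose last entry has a singleton color set -/
def IsVertexChi (n d : ℕ) (v : List RawPOSP) : Prop :=
  v.length = d ∧ (∀ σ ∈ v, IsPOSP n σ) ∧ Linked v ∧ (colorsP (v.getLastD [])).card = 1

/-- the `n`-simplices of `χ^d(Δⁿ)`: linked `d`-tuples of ordered set partitions of `[n]` -/
def IsTopSimplexChi (n d : ℕ) (T : List RawPOSP) : Prop :=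
  T.length = d ∧ Linked T ∧
  ∀ σ ∈ T, IsPOSP n σ ∧ carrierP σ = Finset.range (n+1) ∧ ∀ p ∈ σ, p.2 = p.1

def faceAux : Finset ℕ → List RawPOSP → List RawPOSP
  | _, [] => []
  | S, σ :: rest => dl σ S :: faceAux (Dfun S σ) rest

/-- the face of the simplex `T` of `χ^d(Δⁿ)` determined by `S_d = S`:
`(dl(σ_1,S_1),…,dl(σ_d,S_d))` with `S_i = D(σ_{i+1},S_{i+1})`. -/
def faceT (T : List RawPOSP) (S : Finset ℕ) : List RawPOSP := (faceAux S T.reverse).reverse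

/-- the vertex of the `n`-simplex `T` colored `x` -/
def vertexOf (T : List RawPOSP) (x : ℕ) : List RawPOSP :=
  faceT T ((colorsP (T.getLastD [])) \ {x})

/-- relabel all elements by `f` -/
def relabel (f : ℕ → ℕ) (T : List RawPOSP) : List RawPOSP :=
  T.map (fun σ => σ.map (fun p => (p.1.image f, p.2.image f)))

/-- the unique order preserving bijection `I → J` (extended by the identity) -/
noncomputable def oMap (I J : Finset ℕ) (h : I.card = J.card) (x : ℕ) : ℕ :=
  if hx : x ∈ I then ((J.orderIsoOfFin h.symm) ((I.orderIsoOfFin rfl).symm ⟨x, hx⟩) : ℕ)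
  else x

/-- a compliant binary labeling of the vertices of `χ^d(Δⁿ)` -/
def Compliant (n d : ℕ) (lab : List RawPOSP → Bool) : Prop :=
  ∀ I J : Finset ℕ, I ⊆ Finset.range (n+1) → J ⊆ Finset.range (n+1) →
    ∀ h : I.card = J.card, ∀ v : List RawPOSP, IsVertexChi n d v →
      carrierP v.headI ⊆ I → lab (relabel (oMap I J h) v) = lab v

/-- the number of ordered set partitions of `[n] = {0,…,n}` -/
noncomputable def fOSP (n : ℕ) : ℕ :=
  Nat.card {L : List (Finset ℕ) // IsOSP (Finset.range (n+1)) L}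

/-- membership in the vertex set of `Γ_n(V)` -/
def InGammaV (V : Finset ℕ) (L : List (Finset ℕ)) : Prop :=
  ∃ A rest, L = A :: rest ∧ ¬ A ⊆ V

/-- a prefix in `V`: a tuple of nonempty pairwise disjoint subsets of `V` -/
def IsPrefixIn {α : Type*} [DecidableEq α] (V : Finset α) (P : List (Finset α)) : Prop :=
  (∀ A ∈ P, A.Nonempty ∧ A ⊆ V) ∧ P.Pairwise (fun A B => Disjoint A B)

/-- membership in the vertex set of `Γ_n(V,𝒜)` -/
def InGammaVA (V : Finset ℕ) (P : List (Finset ℕ)) (L : List (Finset ℕ)) : Prop :=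
  ∃ A rest, L = P ++ A :: rest ∧ ¬ A ⊆ V

/-- conducting bipartite graph of the first type -/
def ConductingFirst {V : Type*} (G : SimpleGraph V) (A B : Set V) : Prop :=
  A.ncard = B.ncard + 1 ∧
  ∀ v ∈ A, ∃ M : Set (Sym2 V), IsMatchingSet G M ∧ ∀ u, CriticalVx M u ↔ u = v

/-- conducting bipartite graph of the second type -/
def ConductingSecond {V : Type*} (G : SimpleGraph V) (A B : Set V) : Prop :=
  A.ncard = B.ncard ∧
  ∀ v ∈ A, ∀ w ∈ B, ∃ M : Set (Sym2 V), IsMatchingSet G M ∧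
    ∀ u, CriticalVx M u ↔ (u = v ∨ u = w)

/-- the vertex of the `n`-simplex `(As ‖ Bs)` of `χ²(Δⁿ)` colored `x` is internal -/
def InternalVx (n : ℕ) (As Bs : List (Finset ℕ)) (x : ℕ) : Prop :=
  carrierP (dl (toPairs As) (Finset.range (n+1) \ seenBlk Bs x)) = Finset.range (n+1)

/-! The node of color `x ∈ B_i` is `(A_1 ∪ … ∪ A_i, x)`, so distinct colors give distinct
nodes. Hence `σ` can be read back from `V(σ)` block by block (the smallest first coordinate is
`A_1`, the colors attached to it form `B_1`), and a subset of `V(σ)` is cut out by its set of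
colors, which is exactly what a deletion does. Splitting every block `(A_i, B_i)` into
`A_i \ B_i | B_i` and adding the uncovered elements of `[n]` as a last block turns `σ` into an
ordered set partition of `[n]` whose nodes contain `V(σ)`. -/

@[simp] lemma carrierP_nil : carrierP [] = ∅ := rfl

@[simp] lemma carrierP_cons (p : Finset ℕ × Finset ℕ) (L : RawPOSP) :
    carrierP (p :: L) = p.1 ∪ carrierP L := rfl

@[simp] lemma colorsP_nil : colorsP [] = ∅ := rfl

@[simp] lemma colorsP_cons (p : Finset ℕ × Finset ℕ) (L : RawPOSP) :
    colorsP (p :: L) = p.2 ∪ colorsP L := rfl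

@[simp] lemma nodesAux_nil (acc : Finset ℕ) : nodesAux acc [] = ∅ := rfl

@[simp] lemma nodesAux_cons (acc A B : Finset ℕ) (L : RawPOSP) :
    nodesAux acc ((A, B) :: L) = B.image (fun x => (acc ∪ A, x)) ∪ nodesAux (acc ∪ A) L := rfl

lemma mem_carrierP {x : ℕ} {L : RawPOSP} : x ∈ carrierP L ↔ ∃ p ∈ L, x ∈ p.1 := by
  induction L with
  | nil => simp
  | cons p L ih => simp [ih]

lemma mem_colorsP {x : ℕ} {L : RawPOSP} : x ∈ colorsP L ↔ ∃ p ∈ L, x ∈ p.2 := by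
  induction L with
  | nil => simp
  | cons p L ih => simp [ih]

lemma fst_subset_carrierP {L : RawPOSP} {p : Finset ℕ × Finset ℕ} (hp : p ∈ L) :
    p.1 ⊆ carrierP L := fun _ hx => mem_carrierP.2 ⟨p, hp, hx⟩

lemma carrierP_append (L M : RawPOSP) : carrierP (L ++ M) = carrierP L ∪ carrierP M := by
  induction L with
  | nil => simp
  | cons p L ih => simp [ih, Finset.union_assoc]

lemma colorsP_eq_carrierP {L : RawPOSP} (h : ∀ p ∈ L, p.2 = p.1) : colorsP L = carrierP L := by
  ext x
  simp only [mem_colorsP, mem_carrierP]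
  exact exists_congr fun p => and_congr_right fun hp => by rw [h p hp]

lemma filter_apply_mem_image_eq {α β : Type*} [DecidableEq β] {f : α → β} {N W : Finset α}
    (hW : W ⊆ N) (hf : Set.InjOn f N) : N.filter (fun q => f q ∈ W.image f) = W := by
  ext q
  simp only [Finset.mem_filter, Finset.mem_image]
  refine ⟨fun ⟨hq, w, hw, hwq⟩ => hf (hW hw) hq hwq ▸ hw, fun hq => ⟨hW hq, q, hq, rfl⟩⟩

/-- The shape of a tail `(A_{i+1}, B_{i+1}), …` of a partial ordered set partition, with
`acc = A_1 ∪ … ∪ A_i`; the empty tail is allowed. -/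
def IsPOSPAvoiding (acc : Finset ℕ) (L : RawPOSP) : Prop :=
  (∀ p ∈ L, p.2.Nonempty ∧ p.2 ⊆ p.1 ∧ Disjoint p.1 acc) ∧
    L.Pairwise (fun p q => Disjoint p.1 q.1)

lemma isPOSP_iff {n : ℕ} {σ : RawPOSP} :
    IsPOSP n σ ↔ σ ≠ [] ∧ IsPOSPAvoiding ∅ σ ∧ carrierP σ ⊆ Finset.range (n + 1) := by
  simp only [IsPOSP, IsPOSPAvoiding, List.pairwise_map, Finset.disjoint_empty_right, and_true]
  constructor
  · rintro ⟨hne, hblk, hdisj⟩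
    refine ⟨hne, ⟨fun p hp => ⟨(hblk p hp).1, (hblk p hp).2.1⟩, hdisj⟩, fun x hx => ?_⟩
    obtain ⟨p, hp, hxp⟩ := mem_carrierP.1 hx
    exact (hblk p hp).2.2 hxp
  · rintro ⟨hne, ⟨hblk, hdisj⟩, hrange⟩
    exact ⟨hne, fun p hp =>
      ⟨(hblk p hp).1, (hblk p hp).2, (fst_subset_carrierP hp).trans hrange⟩, hdisj⟩

section Nodes

variable {acc : Finset ℕ} {L : RawPOSP}

lemma IsPOSPAvoiding.tail {A B : Finset ℕ} (h : IsPOSPAvoiding acc ((A, B) :: L)) :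
    IsPOSPAvoiding (acc ∪ A) L := by
  obtain ⟨hblk, hdisj⟩ := h
  rw [List.pairwise_cons] at hdisj
  refine ⟨fun p hp => ?_, hdisj.2⟩
  obtain ⟨hne, hsub, hacc⟩ := hblk p (List.mem_cons_of_mem _ hp)
  exact ⟨hne, hsub, Finset.disjoint_union_right.2 ⟨hacc, (hdisj.1 p hp).symm⟩⟩

lemma IsPOSPAvoiding.mono {acc' : Finset ℕ} (h : IsPOSPAvoiding acc L) (h' : acc' ⊆ acc) :
    IsPOSPAvoiding acc' L :=
  ⟨fun p hp => ⟨(h.1 p hp).1, (h.1 p hp).2.1, (h.1 p hp).2.2.mono_right h'⟩, h.2⟩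

lemma IsPOSPAvoiding.disjoint_carrierP (h : IsPOSPAvoiding acc L) : Disjoint (carrierP L) acc := by
  rw [Finset.disjoint_left]
  intro x hx
  obtain ⟨p, hp, hxp⟩ := mem_carrierP.1 hx
  exact Finset.disjoint_left.1 (h.1 p hp).2.2 hxp

lemma subset_fst_of_mem_nodesAux {q : Finset ℕ × ℕ} (h : q ∈ nodesAux acc L) :
    acc ⊆ q.1 := by
  induction L generalizing acc with
  | nil => simp at h
  | cons p L ih =>
    obtain ⟨A, B⟩ := p
    rcases Finset.mem_union.1 h with h | h
    · obtain ⟨x, -, rfl⟩ := Finset.mem_image.1 h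
      exact Finset.subset_union_left
    · exact Finset.subset_union_left.trans (ih h)

lemma snd_mem_fst_of_mem_nodesAux (hL : ∀ p ∈ L, p.2 ⊆ p.1) {q : Finset ℕ × ℕ}
    (h : q ∈ nodesAux acc L) : q.2 ∈ q.1 := by
  induction L generalizing acc with
  | nil => simp at h
  | cons p L ih =>
    obtain ⟨A, B⟩ := p
    rcases Finset.mem_union.1 h with h | h
    · obtain ⟨x, hx, rfl⟩ := Finset.mem_image.1 h
      exact Finset.mem_union_right _ (hL _ List.mem_cons_self hx)
    · exact ih (fun p hp => hL p (List.mem_cons_of_mem _ hp)) h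

lemma IsPOSPAvoiding.snd_notMem_of_mem_nodesAux (hL : IsPOSPAvoiding acc L)
    {q : Finset ℕ × ℕ} (h : q ∈ nodesAux acc L) : q.2 ∉ acc := by
  induction L generalizing acc with
  | nil => simp at h
  | cons p L ih =>
    obtain ⟨A, B⟩ := p
    rcases Finset.mem_union.1 h with h | h
    · obtain ⟨x, hx, rfl⟩ := Finset.mem_image.1 h
      obtain ⟨-, hBA, hacc⟩ := hL.1 _ List.mem_cons_self
      exact Finset.disjoint_left.1 hacc (hBA hx)
    · exact fun hq => ih hL.tail h (Finset.mem_union_left _ hq)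

lemma IsPOSPAvoiding.fst_ne_of_mem_nodesAux (hL : IsPOSPAvoiding acc L) {q : Finset ℕ × ℕ}
    (h : q ∈ nodesAux acc L) : q.1 ≠ acc := fun heq =>
  hL.snd_notMem_of_mem_nodesAux h
    (heq ▸ snd_mem_fst_of_mem_nodesAux (fun p hp => (hL.1 p hp).2.1) h)

lemma image_snd_nodesAux : (nodesAux acc L).image Prod.snd = colorsP L := by
  induction L generalizing acc with
  | nil => simp
  | cons p L ih =>
    obtain ⟨A, B⟩ := p
    rw [nodesAux_cons, Finset.image_union, ih, Finset.image_image, colorsP_cons]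
    simp [Function.comp_def]

lemma IsPOSPAvoiding.injOn_snd_nodesAux (hL : IsPOSPAvoiding acc L) :
    Set.InjOn Prod.snd (nodesAux acc L : Set (Finset ℕ × ℕ)) := by
  induction L generalizing acc with
  | nil => simp
  | cons p L ih =>
    obtain ⟨A, B⟩ := p
    have hBA : B ⊆ A := (hL.1 _ List.mem_cons_self).2.1
    have head_tail : ∀ x ∈ B, ∀ q ∈ nodesAux (acc ∪ A) L, q.2 ≠ x := fun x hx q hq hqx =>
      hL.tail.snd_notMem_of_mem_nodesAux hq (hqx ▸ Finset.mem_union_right _ (hBA hx))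
    intro q hq q' hq' hqq'
    simp only [nodesAux_cons, Finset.coe_union, Finset.coe_image, Set.mem_union,
      Set.mem_image, Finset.mem_coe] at hq hq'
    rcases hq with hq | hq <;> rcases hq' with hq' | hq'
    · obtain ⟨x, -, rfl⟩ := hq
      obtain ⟨x', -, rfl⟩ := hq'
      exact congrArg (Prod.mk _) hqq'
    · obtain ⟨x, hx, rfl⟩ := hq
      exact absurd hqq'.symm (head_tail x hx q' hq')
    · obtain ⟨x', hx', rfl⟩ := hq'
      exact absurd hqq' (head_tail x' hx' q hq)
    · exact ih hL.tail hq hq' hqq'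

lemma IsPOSPAvoiding.card_nodesAux (hL : IsPOSPAvoiding acc L) :
    (nodesAux acc L).card = (colorsP L).card := by
  rw [← image_snd_nodesAux (acc := acc), Finset.card_image_of_injOn hL.injOn_snd_nodesAux]

lemma exists_mem_nodesAux {x : ℕ} (hx : x ∈ colorsP L) : ∃ C, (C, x) ∈ nodesAux acc L := by
  obtain ⟨q, hq, rfl⟩ := Finset.mem_image.1 (image_snd_nodesAux (acc := acc) ▸ hx)
  exact ⟨q.1, hq⟩

lemma IsPOSPAvoiding.nodesAux_nonempty (hL : IsPOSPAvoiding acc L) (hne : L ≠ []) :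
    (nodesAux acc L).Nonempty := by
  obtain ⟨⟨A, B⟩, L', rfl⟩ := List.exists_cons_of_ne_nil hne
  obtain ⟨x, hx⟩ := (hL.1 _ List.mem_cons_self).1
  obtain ⟨C, hC⟩ := exists_mem_nodesAux (acc := acc) (L := (A, B) :: L')
    (Finset.mem_union_left (colorsP L') hx)
  exact ⟨_, hC⟩

end Nodes

section Injectivity

variable {acc A B : Finset ℕ} {L : RawPOSP}

lemma subset_fst_of_mem_nodesAux_cons {q : Finset ℕ × ℕ}
    (h : q ∈ nodesAux acc ((A, B) :: L)) : acc ∪ A ⊆ q.1 := by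
  rcases Finset.mem_union.1 h with h | h
  · obtain ⟨x, -, rfl⟩ := Finset.mem_image.1 h
    exact subset_rfl
  · exact subset_fst_of_mem_nodesAux h

lemma IsPOSPAvoiding.mem_nodesAux_cons_iff (hL : IsPOSPAvoiding acc ((A, B) :: L)) {x : ℕ} :
    (acc ∪ A, x) ∈ nodesAux acc ((A, B) :: L) ↔ x ∈ B := by
  refine ⟨fun hx => ?_, fun hx => Finset.mem_union_left _ (Finset.mem_image_of_mem _ hx)⟩
  rcases Finset.mem_union.1 hx with hx | hx
  · obtain ⟨y, hy, hyx⟩ := Finset.mem_image.1 hx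
    rwa [← (Prod.mk.inj hyx).2]
  · exact absurd rfl (hL.tail.fst_ne_of_mem_nodesAux hx)

lemma IsPOSPAvoiding.nodesAux_tail_eq (hL : IsPOSPAvoiding acc ((A, B) :: L)) :
    nodesAux (acc ∪ A) L = (nodesAux acc ((A, B) :: L)).filter (fun q => q.1 ≠ acc ∪ A) := by
  ext q
  simp only [nodesAux_cons, Finset.mem_filter, Finset.mem_union, Finset.mem_image]
  constructor
  · exact fun hq => ⟨Or.inr hq, hL.tail.fst_ne_of_mem_nodesAux hq⟩
  · rintro ⟨⟨x, -, rfl⟩ | hq, hne⟩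
    · exact absurd rfl hne
    · exact hq

/-- `acc ∪ A` is the least first coordinate of a node. -/
lemma IsPOSPAvoiding.fst_eq_of_nodesAux_eq {A' B' : Finset ℕ} {M : RawPOSP}
    (hL : IsPOSPAvoiding acc ((A, B) :: L)) (hM : IsPOSPAvoiding acc ((A', B') :: M))
    (h : nodesAux acc ((A, B) :: L) = nodesAux acc ((A', B') :: M)) : A = A' := by
  obtain ⟨b, hb⟩ := (hL.1 _ List.mem_cons_self).1
  obtain ⟨b', hb'⟩ := (hM.1 _ List.mem_cons_self).1
  have hsub : acc ∪ A' ⊆ acc ∪ A :=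
    subset_fst_of_mem_nodesAux_cons (h ▸ hL.mem_nodesAux_cons_iff.2 hb)
  have hsub' : acc ∪ A ⊆ acc ∪ A' :=
    subset_fst_of_mem_nodesAux_cons (h ▸ hM.mem_nodesAux_cons_iff.2 hb')
  calc A = (acc ∪ A) \ acc :=
        (Finset.union_sdiff_cancel_left (hL.1 _ List.mem_cons_self).2.2.symm).symm
    _ = (acc ∪ A') \ acc := by rw [hsub'.antisymm hsub]
    _ = A' := Finset.union_sdiff_cancel_left (hM.1 _ List.mem_cons_self).2.2.symm

lemma IsPOSPAvoiding.nodesAux_injective {M : RawPOSP} (hL : IsPOSPAvoiding acc L)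
    (hM : IsPOSPAvoiding acc M) (h : nodesAux acc L = nodesAux acc M) : L = M := by
  induction L generalizing acc M with
  | nil =>
    by_contra hne
    exact (hM.nodesAux_nonempty (Ne.symm hne)).ne_empty h.symm
  | cons p L ih =>
    obtain ⟨A, B⟩ := p
    obtain _ | ⟨⟨A', B'⟩, M⟩ := M
    · exact absurd h (hL.nodesAux_nonempty (List.cons_ne_nil _ _)).ne_empty
    obtain rfl := hL.fst_eq_of_nodesAux_eq hM h
    obtain rfl : B = B' := by
      ext x
      rw [← hL.mem_nodesAux_cons_iff, h, hM.mem_nodesAux_cons_iff]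
    rw [ih hL.tail hM.tail (by rw [hL.nodesAux_tail_eq, hM.nodesAux_tail_eq, h])]

end Injectivity

section Deletion

variable (S : Finset ℕ)

lemma nodesAux_dlAux (L : RawPOSP) (acc acc₀ : Finset ℕ) :
    nodesAux acc (dlAux S acc₀ L) = (nodesAux (acc ∪ acc₀) L).filter (fun q => q.2 ∉ S) := by
  induction L generalizing acc acc₀ with
  | nil => simp [dlAux]
  | cons p L ih =>
    obtain ⟨A, B⟩ := p
    rw [dlAux, nodesAux_cons, Finset.filter_union, Finset.filter_image]
    split_ifs with hBS
    · have hempty : B.filter (fun x => x ∉ S) = ∅ :=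
        Finset.filter_false_of_mem fun x hx => not_not.2 (hBS hx)
      rw [ih, hempty, Finset.image_empty, Finset.empty_union, Finset.union_assoc]
    · rw [nodesAux_cons, ih, Finset.union_empty, Finset.union_assoc, Finset.filter_not,
        Finset.sdiff_eq_filter]

lemma nodesP_dl (σ : RawPOSP) : nodesP (dl σ S) = (nodesP σ).filter (fun q => q.2 ∉ S) := by
  simpa [nodesP, dl] using nodesAux_dlAux S σ ∅ ∅

lemma carrierP_dlAux_subset (L : RawPOSP) (acc : Finset ℕ) :
    carrierP (dlAux S acc L) ⊆ acc ∪ carrierP L := by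
  induction L generalizing acc with
  | nil => simp [dlAux]
  | cons p L ih =>
    obtain ⟨A, B⟩ := p
    rw [dlAux]
    split_ifs
    · exact (ih _).trans (by simp [Finset.union_assoc])
    · rw [carrierP_cons]
      exact Finset.union_subset (by simp [← Finset.union_assoc, Finset.subset_union_left])
        ((ih ∅).trans (by simpa using Finset.subset_union_right.trans Finset.subset_union_right))

lemma IsPOSPAvoiding.dlAux {L : RawPOSP} {acc : Finset ℕ} (hL : IsPOSPAvoiding acc L) :
    IsPOSPAvoiding ∅ (dlAux S acc L) := by
  induction L generalizing acc with
  | nil => simp [_root_.dlAux, IsPOSPAvoiding]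
  | cons p L ih =>
    obtain ⟨A, B⟩ := p
    rw [_root_.dlAux]
    split_ifs with hBS
    · exact ih hL.tail
    · have htail := ih (hL.tail.mono (Finset.empty_subset _))
      have hBA : B ⊆ A := (hL.1 _ List.mem_cons_self).2.1
      refine ⟨?_, List.pairwise_cons.2 ⟨fun q hq => ?_, htail.2⟩⟩
      · rintro q (_ | ⟨_, hq⟩)
        · exact ⟨Finset.sdiff_nonempty.2 hBS, Finset.sdiff_subset.trans
            (hBA.trans Finset.subset_union_right), Finset.disjoint_empty_right _⟩
        · exact htail.1 q hq
      · have hq' : q.1 ⊆ carrierP L := by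
          simpa using (fst_subset_carrierP hq).trans (carrierP_dlAux_subset S L ∅)
        exact (hL.tail.disjoint_carrierP.mono_left hq').symm

end Deletion

lemma IsPOSPAvoiding.nonempty_subset_nodesP_iff {σ : RawPOSP} (hσ : IsPOSPAvoiding ∅ σ)
    (W : Finset (Finset ℕ × ℕ)) :
    (W ⊆ nodesP σ ∧ W.Nonempty) ↔ ∃ S : Finset ℕ, S ⊂ colorsP σ ∧ W = nodesP (dl σ S) := by
  constructor
  · rintro ⟨hW, ⟨w, hw⟩⟩
    have hcolor : ∀ q ∈ nodesP σ, q.2 ∈ colorsP σ := fun q hq =>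
      image_snd_nodesAux (acc := ∅) ▸ Finset.mem_image_of_mem _ hq
    refine ⟨colorsP σ \ W.image Prod.snd, ?_, ?_⟩
    · refine Finset.ssubset_iff_subset_ne.2 ⟨Finset.sdiff_subset, fun he => ?_⟩
      have hw2 := he.symm ▸ hcolor w (hW hw)
      exact (Finset.mem_sdiff.1 hw2).2 (Finset.mem_image_of_mem _ hw)
    · rw [nodesP_dl]
      refine (filter_apply_mem_image_eq hW hσ.injOn_snd_nodesAux).symm.trans
        (Finset.filter_congr fun q hq => ?_)
      simp only [Finset.mem_sdiff, not_and, not_not]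
      exact ⟨fun h _ => h, fun h => h (hcolor q hq)⟩
  · rintro ⟨S, hS, rfl⟩
    obtain ⟨x, hx, hxS⟩ := Finset.exists_of_ssubset hS
    obtain ⟨C, hC⟩ := exists_mem_nodesAux (acc := ∅) hx
    rw [nodesP_dl]
    exact ⟨Finset.filter_subset _ _, (C, x), Finset.mem_filter.2 ⟨hC, hxS⟩⟩

lemma IsPOSP.isPOSP_dl {n : ℕ} {σ : RawPOSP} {S : Finset ℕ} (h : IsPOSP n σ)
    (hS : S ⊂ colorsP σ) : IsPOSP n (dl σ S) := by
  obtain ⟨-, hσ, hrange⟩ := isPOSP_iff.1 h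
  have hnodes := ((hσ.nonempty_subset_nodesP_iff _).2 ⟨S, hS, rfl⟩).2
  refine isPOSP_iff.2 ⟨fun hnil => ?_, hσ.dlAux S, ?_⟩
  · simp [nodesP, hnil] at hnodes
  · simpa [dl] using (carrierP_dlAux_subset S σ ∅).trans (by simpa using hrange)

section Completion

def refineBlocks (L : RawPOSP) : RawPOSP :=
  L.flatMap fun p => [(p.1 \ p.2, p.1 \ p.2), (p.2, p.2)]

variable {L : RawPOSP}

lemma mem_refineBlocks {q : Finset ℕ × Finset ℕ} (hL : ∀ p ∈ L, p.2 ⊆ p.1)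
    (hq : q ∈ refineBlocks L) : q.2 = q.1 ∧ ∃ p ∈ L, q.1 ⊆ p.1 := by
  obtain ⟨p, hp, hq⟩ := List.mem_flatMap.1 hq
  rcases List.mem_pair.1 hq with rfl | rfl
  · exact ⟨rfl, p, hp, Finset.sdiff_subset⟩
  · exact ⟨rfl, p, hp, hL p hp⟩

lemma carrierP_refineBlocks (hL : ∀ p ∈ L, p.2 ⊆ p.1) :
    carrierP (refineBlocks L) = carrierP L := by
  induction L with
  | nil => rfl
  | cons p L ih =>
    rw [refineBlocks, List.flatMap_cons, ← refineBlocks, carrierP_append,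
      ih fun q hq => hL q (List.mem_cons_of_mem _ hq)]
    simp [Finset.sdiff_union_of_subset (hL p List.mem_cons_self)]

lemma pairwise_refineBlocks (hL : ∀ p ∈ L, p.2 ⊆ p.1)
    (hdisj : L.Pairwise fun p q => Disjoint p.1 q.1) :
    (refineBlocks L).Pairwise fun p q => Disjoint p.1 q.1 := by
  refine List.pairwise_flatMap.2 ⟨fun p _ => by simp [Finset.sdiff_disjoint], ?_⟩
  refine hdisj.imp_of_mem fun {p p'} hp hp' hpp' q hq q' hq' => ?_
  have hsub : ∀ r ∈ L, ∀ s ∈ [(r.1 \ r.2, r.1 \ r.2), (r.2, r.2)], s.1 ⊆ r.1 := by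
    intro r hr s hs
    rcases List.mem_pair.1 hs with rfl | rfl
    exacts [Finset.sdiff_subset, hL r hr]
  exact hpp'.mono (hsub p hp q hq) (hsub p' hp' q' hq')

lemma nodesAux_subset_nodesAux_refineBlocks (hL : ∀ p ∈ L, p.2 ⊆ p.1) (acc : Finset ℕ) :
    nodesAux acc L ⊆ nodesAux acc (refineBlocks L) := by
  induction L generalizing acc with
  | nil => exact subset_rfl
  | cons p L ih =>
    obtain ⟨A, B⟩ := p
    have hBA : B ⊆ A := hL _ List.mem_cons_self
    have hacc : acc ∪ (A \ B) ∪ B = acc ∪ A := by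
      rw [Finset.union_assoc, Finset.sdiff_union_of_subset hBA]
    rw [refineBlocks, List.flatMap_cons, ← refineBlocks, List.cons_append, List.cons_append,
      List.nil_append, nodesAux_cons, nodesAux_cons, nodesAux_cons, hacc]
    exact Finset.union_subset_union subset_rfl (ih (fun q hq => hL q (List.mem_cons_of_mem _ hq)) _)
      |>.trans Finset.subset_union_right

lemma nodesAux_subset_nodesAux_append (acc : Finset ℕ) (M : RawPOSP) :
    nodesAux acc L ⊆ nodesAux acc (L ++ M) := by
  induction L generalizing acc with
  | nil => simp
  | cons p L ih =>
    obtain ⟨A, B⟩ := p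
    exact Finset.union_subset_union subset_rfl (ih _)

lemma carrierP_filter_nonempty : carrierP (L.filter fun p => p.1.Nonempty) = carrierP L := by
  induction L with
  | nil => rfl
  | cons p L ih =>
    by_cases hp : p.1.Nonempty
    · simp [hp, ih]
    · simp [ih, Finset.not_nonempty_iff_eq_empty.1 hp]

lemma nodesAux_filter_nonempty (hL : ∀ p ∈ L, p.2 ⊆ p.1) (acc : Finset ℕ) :
    nodesAux acc (L.filter fun p => p.1.Nonempty) = nodesAux acc L := by
  induction L generalizing acc with
  | nil => rfl
  | cons p L ih =>
    obtain ⟨A, B⟩ := p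
    have ih' := ih (fun q hq => hL q (List.mem_cons_of_mem _ hq))
    by_cases hA : A.Nonempty
    · simp [hA, ih']
    · obtain rfl := Finset.not_nonempty_iff_eq_empty.1 hA
      obtain rfl := Finset.subset_empty.1 (hL _ List.mem_cons_self)
      simp [ih']

lemma isFullOSP_filter_refineBlocks {n : ℕ} (hL : ∀ p ∈ L, p.2 ⊆ p.1)
    (hdisj : L.Pairwise fun p q => Disjoint p.1 q.1)
    (hcarrier : carrierP L = Finset.range (n + 1)) :
    IsFullOSP n ((refineBlocks L).filter fun p => p.1.Nonempty) := by
  set τ := (refineBlocks L).filter fun p => p.1.Nonempty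
  have hτblocks : ∀ p ∈ τ, p.1.Nonempty ∧ p.2 = p.1 := fun p hp =>
    have hp := List.mem_filter.1 hp
    ⟨by simpa using hp.2, (mem_refineBlocks hL hp.1).1⟩
  have hτcarrier : carrierP τ = Finset.range (n + 1) := by
    rw [carrierP_filter_nonempty, carrierP_refineBlocks hL, hcarrier]
  refine ⟨isPOSP_iff.2 ⟨fun hnil => ?_, ⟨fun p hp => ?_, ?_⟩, hτcarrier.le⟩, hτcarrier,
    fun p hp => (hτblocks p hp).2⟩
  · rw [hnil, carrierP_nil] at hτcarrier
    exact Finset.nonempty_range_add_one.ne_empty hτcarrier.symm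
  · obtain ⟨hne, heq⟩ := hτblocks p hp
    exact ⟨heq ▸ hne, heq.le, Finset.disjoint_empty_right _⟩
  · exact (pairwise_refineBlocks hL hdisj).filter _

end Completion

lemma IsPOSP.exists_isFullOSP {n : ℕ} {σ : RawPOSP} (h : IsPOSP n σ) :
    ∃ τ : RawPOSP, IsFullOSP n τ ∧ nodesP σ ⊆ nodesP τ := by
  obtain ⟨-, hσ, hrange⟩ := isPOSP_iff.1 h
  set σ' := σ ++ [(Finset.range (n + 1) \ carrierP σ, ∅)]
  have hBA : ∀ p ∈ σ', p.2 ⊆ p.1 := by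
    intro p hp
    rcases List.mem_append.1 hp with hp | hp
    · exact (hσ.1 p hp).2.1
    · simp [List.mem_singleton.1 hp]
  have hdisj : σ'.Pairwise fun p q => Disjoint p.1 q.1 := by
    refine List.pairwise_append.2 ⟨hσ.2, List.pairwise_singleton _ _, ?_⟩
    intro p hp q hq
    obtain rfl := List.mem_singleton.1 hq
    exact Finset.disjoint_sdiff.mono_left (fst_subset_carrierP hp)
  have hcarrier : carrierP σ' = Finset.range (n + 1) := by
    simp [σ', carrierP_append, Finset.union_sdiff_of_subset hrange]
  refine ⟨_, isFullOSP_filter_refineBlocks hBA hdisj hcarrier, ?_⟩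
  calc nodesP σ ⊆ nodesP σ' := nodesAux_subset_nodesAux_append _ _
    _ ⊆ nodesAux ∅ (refineBlocks σ') := nodesAux_subset_nodesAux_refineBlocks hBA _
    _ = _ := (nodesAux_filter_nonempty (fun p hp => (mem_refineBlocks hBA hp).1.le) _).symm

lemma IsFullOSP.card_nodesP {n : ℕ} {σ : RawPOSP} (h : IsFullOSP n σ) :
    (nodesP σ).card = n + 1 := by
  rw [nodesP, (isPOSP_iff.1 h.1).2.1.card_nodesAux, colorsP_eq_carrierP h.2.2, h.2.1,
    Finset.card_range]

/-- `σ ↦ V(σ)` is a bijection from partial ordered set partitions of `[n]` onto the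
nonempty simplices of `χ(Δⁿ)`; `|V(σ)| = dim σ + 1`; ordered set partitions of `[n]`
give maximal simplices; the nonempty subsets of `V(σ)` are exactly the `V(dl(σ,S))`
for `S ⊊ C(σ)`. -/
theorem statement5 (n : ℕ) :
    (∀ σ : RawPOSP, IsPOSP n σ → IsSimplexChi n (nodesP σ) ∧ (nodesP σ).Nonempty) ∧
    (∀ σ τ : RawPOSP, IsPOSP n σ → IsPOSP n τ → nodesP σ = nodesP τ → σ = τ) ∧
    (∀ W : Finset (Finset ℕ × ℕ), IsSimplexChi n W → W.Nonempty →
      ∃ σ : RawPOSP, IsPOSP n σ ∧ nodesP σ = W) ∧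
    (∀ σ : RawPOSP, IsPOSP n σ → (nodesP σ).card = (colorsP σ).card) ∧
    (∀ σ : RawPOSP, IsFullOSP n σ → (nodesP σ).card = n + 1 ∧
      ∀ W : Finset (Finset ℕ × ℕ), IsSimplexChi n W → nodesP σ ⊆ W → W = nodesP σ) ∧
    (∀ σ : RawPOSP, IsPOSP n σ → ∀ W : Finset (Finset ℕ × ℕ),
      (W ⊆ nodesP σ ∧ W.Nonempty) ↔ ∃ S : Finset ℕ, S ⊂ colorsP σ ∧ W = nodesP (dl σ S)) := by
  have avoiding {σ : RawPOSP} (h : IsPOSP n σ) : IsPOSPAvoiding ∅ σ := (isPOSP_iff.1 h).2.1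
  refine ⟨fun σ h => ⟨h.exists_isFullOSP, (avoiding h).nodesAux_nonempty h.1⟩,
    fun σ τ hσ hτ => (avoiding hσ).nodesAux_injective (avoiding hτ), ?_,
    fun σ h => (avoiding h).card_nodesAux, fun σ h => ⟨h.card_nodesP, ?_⟩,
    fun σ h => (avoiding h).nonempty_subset_nodesP_iff⟩
  · rintro W ⟨τ, hτ, hW⟩ hne
    obtain ⟨S, hS, rfl⟩ := ((avoiding hτ.1).nonempty_subset_nodesP_iff W).1 ⟨hW, hne⟩
    exact ⟨dl τ S, hτ.1.isPOSP_dl hS, rfl⟩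
  · rintro W ⟨τ, hτ, hW⟩ hσW
    have hστ : nodesP σ = nodesP τ := Finset.eq_of_subset_of_card_le (hσW.trans hW)
      (by rw [h.card_nodesP, hτ.card_nodesP])
    exact (hστ ▸ hW).antisymm hσW
end

section
/- Let σ be an ordered set partition of [n] and x ∈ F(σ). Then the flip F(σ,x) is a well-defined ordered set partition of [n], x ∈ F(F(σ,x)), and F(F(σ,x),x) = σ. Moreover σ and F(σ,x), viewed as n-simplices of χ(Δⁿ), share the common (n−1)-dimensional face dl(σ,{x}) = dl(F(σ,x),{x}). -/
open Finset

/-!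
Flipping `x` either splits `x` off its block `A` (when `|A| ≥ 2`), giving `… | {x} | A ∖ {x} | …`,
or merges the singleton block `{x}` into the next block `B`, giving `… | {x} ∪ B | …`.
These two moves undo each other; the hypothesis `x ∈ F(σ)` excludes the one case where neither
applies, `{x}` being the last block. Deleting the colour `x` glues `{x}` to the following block
in both cases, so `σ` and `F(σ,x)` have the same deletion. Each property is proved by induction
over the blocks in front of the one containing `x`.
-/

lemma lunion_nil {α : Type*} [DecidableEq α] : lunion ([] : List (Finset α)) = ∅ := rfl

lemma lunion_cons {α : Type*} [DecidableEq α] (A : Finset α) (L : List (Finset α)) :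
    lunion (A :: L) = A ∪ lunion L := rfl

lemma disjoint_lunion_right {α : Type*} [DecidableEq α] {s : Finset α} {L : List (Finset α)} :
    Disjoint s (lunion L) ↔ ∀ B ∈ L, Disjoint s B := by
  induction L with
  | nil => simp [lunion_nil]
  | cons A L ih => simp [lunion_cons, disjoint_union_right, ih]

lemma notMem_lunion {α : Type*} [DecidableEq α] {x : α} {L : List (Finset α)} :
    x ∉ lunion L ↔ ∀ B ∈ L, x ∉ B := by
  simpa using disjoint_lunion_right (s := {x}) (L := L)

lemma isOSP_iff {α : Type*} [DecidableEq α] {S : Finset α} {L : List (Finset α)} :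
    IsOSP S L ↔ IsOSP (lunion L) L ∧ lunion L = S := by
  unfold IsOSP; aesop

lemma isOSP_lunion_cons {α : Type*} [DecidableEq α] {B : Finset α} {R : List (Finset α)} :
    IsOSP (lunion (B :: R)) (B :: R) ↔
      B.Nonempty ∧ Disjoint B (lunion R) ∧ IsOSP (lunion R) R := by
  simp only [IsOSP, List.forall_mem_cons, List.pairwise_cons, disjoint_lunion_right]
  tauto

lemma colorsP_toPairs (L : List (Finset ℕ)) : colorsP (toPairs L) = lunion L := by
  induction L with
  | nil => rfl
  | cons A L ih => exact congrArg (A ∪ ·) ih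

lemma colorsP_dlAux (S acc : Finset ℕ) (σ : RawPOSP) :
    colorsP (dlAux S acc σ) = colorsP σ \ S := by
  induction σ generalizing acc with
  | nil => simp [colorsP, dlAux]
  | cons p σ ih =>
    obtain ⟨A, B⟩ := p
    change colorsP (dlAux S acc ((A, B) :: σ)) = (B ∪ colorsP σ) \ S
    rw [union_sdiff_distrib]
    by_cases hB : B ⊆ S
    · rw [dlAux, if_pos hB, ih, sdiff_eq_empty_iff_subset.mpr hB, empty_union]
    · rw [dlAux, if_neg hB]
      exact congrArg (B \ S ∪ ·) (ih ∅)

lemma mem_Fset_iff {n x : ℕ} {L : List (Finset ℕ)} :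
    x ∈ Fset n L ↔ x ∈ range (n + 1) ∧ L.getLast? ≠ some {x} := by
  unfold Fset
  rcases L.getLast? with _ | A
  · simp
  · by_cases hA : #A = 1
    · obtain ⟨a, rfl⟩ := card_eq_one.mp hA
      simp [eq_comm]
    · have : A ≠ {x} := fun h => hA (h ▸ card_singleton x)
      simp [hA, this]

lemma flipOSP_of_two_le_card {x : ℕ} {A : Finset ℕ} (hx : x ∈ A) (h2 : 2 ≤ #A)
    (R : List (Finset ℕ)) : flipOSP x (A :: R) = {x} :: A.erase x :: R := by
  simp [flipOSP, hx, h2]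

lemma flipOSP_singleton_cons (x : ℕ) (B : Finset ℕ) (R : List (Finset ℕ)) :
    flipOSP x ({x} :: B :: R) = insert x B :: R := by
  simp [flipOSP]

lemma flipOSP_of_notMem {x : ℕ} {A : Finset ℕ} (hx : x ∉ A) (R : List (Finset ℕ)) :
    flipOSP x (A :: R) = A :: flipOSP x R := by
  simp [flipOSP, hx]

/-- `x ∈ F(σ)`, for `σ` an ordered set partition of the union of its blocks. -/
def IsFlippable (x : ℕ) (L : List (Finset ℕ)) : Prop :=
  IsOSP (lunion L) L ∧ x ∈ lunion L ∧ L.getLast? ≠ some {x}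

@[elab_as_elim]
theorem IsFlippable.induction {x : ℕ} {motive : List (Finset ℕ) → Prop}
    (split : ∀ A R, x ∈ A → 2 ≤ #A → Disjoint A (lunion R) → IsOSP (lunion R) R →
      motive (A :: R))
    (merge : ∀ B R, B.Nonempty → x ∉ B → x ∉ lunion R → Disjoint B (lunion R) →
      IsOSP (lunion R) R → motive ({x} :: B :: R))
    (skip : ∀ A R, A.Nonempty → x ∉ A → Disjoint A (lunion R) → motive R → motive (A :: R)) :
    ∀ {L}, IsFlippable x L → motive L
  | [], ⟨_, hx, _⟩ => absurd hx (notMem_empty x)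
  | A :: R, ⟨hL, hx, hlast⟩ => by
    obtain ⟨hA, hAR, hR⟩ := isOSP_lunion_cons.mp hL
    by_cases hxA : x ∈ A
    · by_cases h2 : 2 ≤ #A
      · exact split A R hxA h2 hAR hR
      · obtain rfl : A = {x} := eq_singleton_iff_unique_mem.mpr
          ⟨hxA, fun y hy => card_le_one.mp (by omega) y hy x hxA⟩
        cases R with
        | nil => exact absurd rfl hlast
        | cons B R =>
          obtain ⟨hB, hBR, hR⟩ := isOSP_lunion_cons.mp hR
          have hxBR : x ∉ B ∪ lunion R := by simpa [lunion_cons] using hAR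
          rw [mem_union, not_or] at hxBR
          exact merge B R hB hxBR.1 hxBR.2 hBR hR
    · have hxR : x ∈ lunion R := by simpa [lunion_cons, hxA] using hx
      cases R with
      | nil => exact absurd hxR (notMem_empty x)
      | cons B R =>
        have hR : IsFlippable x (B :: R) := ⟨hR, hxR, List.getLast?_cons_cons ▸ hlast⟩
        exact skip A _ hA hxA hAR (IsFlippable.induction split merge skip hR)

lemma isOSP_flipOSP {x : ℕ} {L : List (Finset ℕ)} (h : IsFlippable x L) :
    IsOSP (lunion L) (flipOSP x L) := by
  refine h.induction ?split ?merge ?skip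
  · intro A R hx h2 hAR hR
    have hxR : x ∉ lunion R := disjoint_left.mp hAR hx
    have hAx : (A.erase x).Nonempty := (one_lt_card_iff_nontrivial.mp h2).erase_nonempty
    have hunion : lunion (A :: R) = lunion ({x} :: A.erase x :: R) := by
      rw [lunion_cons, lunion_cons, lunion_cons, ← union_assoc, ← insert_eq, insert_erase hx]
    rw [flipOSP_of_two_le_card hx h2, hunion]
    refine isOSP_lunion_cons.mpr
      ⟨singleton_nonempty x, ?_, isOSP_lunion_cons.mpr ⟨hAx, ?_, hR⟩⟩
    · simp [lunion_cons, hxR]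
    · exact disjoint_of_subset_left (erase_subset x A) hAR
  · intro B R _ hxB hxR hBR hR
    rw [flipOSP_singleton_cons, lunion_cons, lunion_cons, ← union_assoc, ← insert_eq,
      ← lunion_cons]
    refine isOSP_lunion_cons.mpr ⟨insert_nonempty x B, ?_, hR⟩
    simp [hxR, hBR]
  · intro A R hA hx hAR ih
    have hunion : lunion (flipOSP x R) = lunion R := (isOSP_iff.mp ih).2
    rw [flipOSP_of_notMem hx, lunion_cons, ← hunion, ← lunion_cons]
    exact isOSP_lunion_cons.mpr ⟨hA, hunion ▸ hAR, hunion ▸ (isOSP_iff.mp ih).1⟩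

lemma two_le_card_insert {x : ℕ} {B : Finset ℕ} (hB : B.Nonempty) (hx : x ∉ B) :
    2 ≤ #(insert x B) := by
  rw [card_insert_of_notMem hx]
  exact Nat.succ_le_succ (card_pos.mpr hB)

lemma flipOSP_flipOSP {x : ℕ} {L : List (Finset ℕ)} (h : IsFlippable x L) :
    flipOSP x (flipOSP x L) = L := by
  refine h.induction ?split ?merge ?skip
  · intro A R hx h2 _ _
    rw [flipOSP_of_two_le_card hx h2, flipOSP_singleton_cons, insert_erase hx]
  · intro B R hB hxB _ _ _
    rw [flipOSP_singleton_cons, flipOSP_of_two_le_card (mem_insert_self x B)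
      (two_le_card_insert hB hxB), erase_insert hxB]
  · intro A R _ hx _ ih
    rw [flipOSP_of_notMem hx, flipOSP_of_notMem hx, ih]

lemma getLast?_ne_some_singleton {x : ℕ} {L : List (Finset ℕ)} (hx : x ∉ lunion L) :
    L.getLast? ≠ some {x} :=
  fun h => notMem_lunion.mp hx _ (List.mem_of_getLast? h) (mem_singleton_self x)

lemma getLast?_cons_ne_some_singleton {x : ℕ} {A : Finset ℕ} {L : List (Finset ℕ)}
    (hA : A ≠ {x}) (hL : L.getLast? ≠ some {x}) : (A :: L).getLast? ≠ some {x} := by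
  rw [List.getLast?_cons]
  rcases hM : L.getLast? with _ | B
  · simpa using hA
  · simpa [hM] using hL

lemma getLast?_flipOSP_ne_some_singleton {x : ℕ} {L : List (Finset ℕ)} (h : IsFlippable x L) :
    (flipOSP x L).getLast? ≠ some {x} := by
  refine h.induction ?split ?merge ?skip
  · intro A R hx h2 hAR _
    rw [flipOSP_of_two_le_card hx h2, List.getLast?_cons_cons]
    refine getLast?_ne_some_singleton ?_
    simp [lunion_cons, disjoint_left.mp hAR hx]
  · intro B R hB hxB hxR _ _
    rw [flipOSP_singleton_cons]
    refine getLast?_cons_ne_some_singleton (fun h => ?_) (getLast?_ne_some_singleton hxR)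
    have := two_le_card_insert hB hxB
    rw [h, card_singleton] at this
    omega
  · intro A R _ hx _ ih
    rw [flipOSP_of_notMem hx]
    exact getLast?_cons_ne_some_singleton (fun h => hx (h ▸ mem_singleton_self x)) ih

lemma dlAux_toPairs_singleton_cons (x : ℕ) (acc : Finset ℕ) (L : List (Finset ℕ)) :
    dlAux {x} acc (toPairs ({x} :: L)) = dlAux {x} (acc ∪ {x}) (toPairs L) := by
  simp [toPairs, dlAux]

lemma dlAux_toPairs_cons_of_not_subset {x : ℕ} {A : Finset ℕ} (hA : ¬ A ⊆ {x})
    (acc : Finset ℕ) (L : List (Finset ℕ)) :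
    dlAux {x} acc (toPairs (A :: L)) = (acc ∪ A, A \ {x}) :: dlAux {x} ∅ (toPairs L) := by
  simp [toPairs, dlAux, hA]

lemma not_subset_singleton_of_two_le_card {x : ℕ} {A : Finset ℕ} (h2 : 2 ≤ #A) :
    ¬ A ⊆ {x} :=
  fun h => by simpa using (card_le_card h).trans_lt' h2

lemma not_subset_singleton_of_notMem {x : ℕ} {A : Finset ℕ} (hA : A.Nonempty) (hx : x ∉ A) :
    ¬ A ⊆ {x} :=
  fun h => hx (hA.subset_singleton_iff.mp h ▸ mem_singleton_self x)

lemma dlAux_toPairs_flipOSP {x : ℕ} {L : List (Finset ℕ)} (h : IsFlippable x L) :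
    ∀ acc, dlAux {x} acc (toPairs (flipOSP x L)) = dlAux {x} acc (toPairs L) := by
  refine h.induction ?split ?merge ?skip
  · intro A R hx h2 _ _ acc
    have hAx : ¬ A.erase x ⊆ {x} :=
      not_subset_singleton_of_notMem (one_lt_card_iff_nontrivial.mp h2).erase_nonempty
        (notMem_erase x A)
    rw [flipOSP_of_two_le_card hx h2, dlAux_toPairs_singleton_cons,
      dlAux_toPairs_cons_of_not_subset hAx,
      dlAux_toPairs_cons_of_not_subset (not_subset_singleton_of_two_le_card h2),
      union_assoc, ← insert_eq, insert_erase hx, sdiff_singleton_eq_erase,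
      sdiff_singleton_eq_erase, erase_idem]
  · intro B R hB hxB _ _ _ acc
    have hxB' : ¬ insert x B ⊆ {x} :=
      not_subset_singleton_of_two_le_card (two_le_card_insert hB hxB)
    rw [flipOSP_singleton_cons, dlAux_toPairs_singleton_cons,
      dlAux_toPairs_cons_of_not_subset hxB', dlAux_toPairs_cons_of_not_subset
      (not_subset_singleton_of_notMem hB hxB), union_assoc, ← insert_eq,
      insert_sdiff_of_mem _ (mem_singleton_self x)]
  · intro A R hA hx _ ih acc
    rw [flipOSP_of_notMem hx, dlAux_toPairs_cons_of_not_subset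
      (not_subset_singleton_of_notMem hA hx), dlAux_toPairs_cons_of_not_subset
      (not_subset_singleton_of_notMem hA hx), ih]

/-- The flip `F(σ,x)` is a well-defined ordered set partition of `[n]`, `x ∈ F(F(σ,x))`,
`F(F(σ,x),x) = σ`, and `σ` and `F(σ,x)` share the common `(n−1)`-dimensional face
`dl(σ,{x}) = dl(F(σ,x),{x})`. -/
theorem statement8 (n : ℕ) (L : List (Finset ℕ)) (hL : IsOSP (Finset.range (n + 1)) L)
    (x : ℕ) (hx : x ∈ Fset n L) :
    IsOSP (Finset.range (n + 1)) (flipOSP x L) ∧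
    x ∈ Fset n (flipOSP x L) ∧
    flipOSP x (flipOSP x L) = L ∧
    dl (toPairs L) {x} = dl (toPairs (flipOSP x L)) {x} ∧
    (colorsP (dl (toPairs L) {x})).card = n := by
  obtain ⟨hxn, hlast⟩ := mem_Fset_iff.mp hx
  obtain ⟨hL, hunion⟩ := isOSP_iff.mp hL
  have hflip : IsFlippable x L := ⟨hL, hunion ▸ hxn, hlast⟩
  refine ⟨hunion ▸ isOSP_flipOSP hflip,
    mem_Fset_iff.mpr ⟨hxn, getLast?_flipOSP_ne_some_singleton hflip⟩,
    flipOSP_flipOSP hflip, (dlAux_toPairs_flipOSP hflip ∅).symm, ?_⟩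
  rw [dl, colorsP_dlAux, colorsP_toPairs, hunion, card_sdiff_of_subset (by simpa using hxn)]
  simp
end
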